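/- arXiv:2205.02174 — 4 statements merged into one kernel-verified Lean document; each statement's English description precedes it below -/
import Mathlib

section
/- Suppose C is semiprime or satisfies condition (⋆). Then for all compact elements a,b ∈ C, if [a,b] ≤ ρ(⊥), then there exists an integer m ≥ 0 such that [[a,a]^m,[b,b]^m] = ⊥. -/
open CompleteLattice

/-- A complete lattice equipped with a commutator operation, axiomatizing the congruence
lattice of an algebra in a semidegenerate congruence-modular variety whose compact
congruences are closed under the commutator. -/
class CommutatorLattice (C : Type*) [CompleteLattice C] where
  comm : C → C → C
  comm_comm : ∀ a b : C, comm a b = comm b a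
  comm_sSup : ∀ (s : Set C) (b : C), comm (sSup s) b = ⨆ a ∈ s, comm a b
  comm_le_inf : ∀ a b : C, comm a b ≤ a ⊓ b
  comm_top : ∀ a : C, comm a ⊤ = a
  compactlyGenerated : ∀ x : C,
    ∃ s : Set C, (∀ a ∈ s, IsCompactElement a) ∧ sSup s = x
  top_isCompact : IsCompactElement (⊤ : C)
  comm_isCompact : ∀ a b : C, IsCompactElement a → IsCompactElement b →
    IsCompactElement (comm a b)

namespace CommutatorLattice

variable {C : Type*} [CompleteLattice C] [CommutatorLattice C]

/-- The residuation `a → b := ⨆ {c | [a,c] ≤ b}`. -/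
def resid (a b : C) : C := sSup {c : C | comm a c ≤ b}

/-- The annihilator `a⊥ := a → ⊥`. -/
def ann (a : C) : C := resid a ⊥

/-- Iterated commutator: `cpow a n = [a,a]^n`, with the convention `[a,a]^0 = a`.
Note that `[a,b]^n` for `n ≥ 1` equals `cpow (comm a b) (n-1)`. -/
def cpow (a : C) : ℕ → C
  | 0 => a
  | n + 1 => comm (cpow a n) (cpow a n)

/-- Prime elements: `p ≠ ⊤` and `[a,b] ≤ p` implies `a ≤ p` or `b ≤ p`. -/
def IsPrime (p : C) : Prop := p ≠ ⊤ ∧ ∀ a b : C, comm a b ≤ p → a ≤ p ∨ b ≤ p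

/-- The radical `ρ(a) := ⨅ {p prime | a ≤ p}`. -/
def radical (a : C) : C := sInf {p : C | IsPrime p ∧ a ≤ p}

variable (C) in
/-- `C` is semiprime if `ρ(⊥) = ⊥`. -/
def Semiprime : Prop := radical (⊥ : C) = ⊥

variable (C) in
/-- Condition (⋆): for all compact `a`, `b` and all `n ≥ 1` there is `m ≥ 0` with
`[[a,a]^m, [b,b]^m] ≤ [a,b]^n`.  Here `cpow (comm a b) n = [a,b]^(n+1)`, so `n : ℕ`
ranges exactly over the exponents `≥ 1` of the paper. -/
def Star : Prop := ∀ a b : C, IsCompactElement a → IsCompactElement b →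
  ∀ n : ℕ, ∃ m : ℕ, comm (cpow a m) (cpow b m) ≤ cpow (comm a b) n

/-- Pure elements: `t ⊔ a⊥ = ⊤` for every compact `a ≤ t`. -/
def IsPure (t : C) : Prop := ∀ a : C, IsCompactElement a → a ≤ t → t ⊔ ann a = ⊤

/-- w-pure elements: `t ⊔ (a → ρ(⊥)) = ⊤` for every compact `a ≤ t`. -/
def IsWPure (t : C) : Prop :=
  ∀ a : C, IsCompactElement a → a ≤ t → t ⊔ resid a (radical ⊥) = ⊤

/-- Complemented elements. -/
def IsComplEl (a : C) : Prop := ∃ b : C, a ⊔ b = ⊤ ∧ a ⊓ b = ⊥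

/-- Regular elements: joins of sets of complemented elements. -/
def IsRegular (t : C) : Prop := ∃ S : Set C, (∀ a ∈ S, IsComplEl a) ∧ t = sSup S

/-- Max-regular elements: maximal among regular elements distinct from `⊤`. -/
def IsMaxRegular (t : C) : Prop :=
  IsRegular t ∧ t ≠ ⊤ ∧ ∀ u : C, IsRegular u → u ≠ ⊤ → t ≤ u → u = t

/-- Maximal elements of `C \ {⊤}`. -/
def IsMaximal (p : C) : Prop := p ≠ ⊤ ∧ ∀ q : C, q ≠ ⊤ → p ≤ q → q = p

/-- Minimal primes. -/
def IsMinPrime (p : C) : Prop := IsPrime p ∧ ∀ q : C, IsPrime q → q ≤ p → q = p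

variable (C) in
/-- `C` is mp if every prime lies above a unique minimal prime. -/
def MP : Prop := ∀ p : C, IsPrime p → ∃! q : C, IsMinPrime q ∧ q ≤ p

variable (C) in
/-- `C` is PF if `a⊥` is pure for every compact `a`. -/
def PF : Prop := ∀ a : C, IsCompactElement a → IsPure (ann a)

variable (C) in
/-- `C` is PP if `a⊥` is complemented for every compact `a`. -/
def PP : Prop := ∀ a : C, IsCompactElement a → IsComplEl (ann a)

/-- `O(p) := ⨆ {a compact | a⊥ ≰ p}`. -/
def O (p : C) : C := sSup {a : C | IsCompactElement a ∧ ¬ ann a ≤ p}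

variable (C) in
/-- `C` is normal. -/
def Normal : Prop := ∀ t u : C, t ⊔ u = ⊤ →
  ∃ a b : C, t ⊔ a = ⊤ ∧ u ⊔ b = ⊤ ∧ comm a b = ⊥

variable (C) in
/-- `C` is B-normal. -/
def BNormal : Prop := ∀ t u : C, t ⊔ u = ⊤ →
  ∃ a b : C, IsComplEl a ∧ IsComplEl b ∧ t ⊔ a = ⊤ ∧ u ⊔ b = ⊤ ∧ comm a b = ⊥

variable (C) in
/-- `C` is purified. -/
def Purified : Prop := ∀ p q : C, IsMinPrime p → IsMinPrime q → p ≠ q →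
  ∃ a : C, IsComplEl a ∧ a ≤ p ∧ ann a ≤ q

variable (C) in
/-- The prime spectrum of `C`. -/
abbrev Spec := {p : C // IsPrime p}

variable (C) in
/-- The Zariski topology on `Spec C`: the closed sets are the `V(t) = {p | t ≤ p}`,
equivalently the topology generated by the sets `D(t) = {p | t ≰ p}`. -/
def zariskiTop : TopologicalSpace (Spec C) :=
  TopologicalSpace.generateFrom {U : Set (Spec C) | ∃ t : C, U = {p : Spec C | ¬ t ≤ p.1}}

variable (C) in
/-- The flat topology on `Spec C`: generated by the open basis `V(a)`, `a` compact. -/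
def flatTop : TopologicalSpace (Spec C) :=
  TopologicalSpace.generateFrom
    {U : Set (Spec C) | ∃ a : C, IsCompactElement a ∧ U = {p : Spec C | a ≤ p.1}}

/-! The heart of the argument is the commutator-lattice analogue of Krull's lemma: if no
iterated commutator `[c,c]^n` of a compact `c` lies below `x`, a Zorn-maximal element above
`x` with this property is prime. Hence `[a,b] ≤ ρ(⊥)` makes `[a,b]` nilpotent, and (⋆)
transfers this to `[[a,a]^m,[b,b]^m]`; in the semiprime case already `[a,b] = ⊥`. -/

lemma comm_sup_left (x y z : C) : comm (x ⊔ y) z = comm x z ⊔ comm y z := by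
  simpa only [sSup_pair, iSup_pair] using comm_sSup ({x, y} : Set C) z

lemma comm_sup_right (x y z : C) : comm x (y ⊔ z) = comm x y ⊔ comm x z := by
  rw [comm_comm, comm_sup_left, comm_comm y, comm_comm z]

lemma comm_mono_left {x y : C} (z : C) (h : x ≤ y) : comm x z ≤ comm y z := by
  rw [← sup_eq_right.mpr h, comm_sup_left]
  exact le_sup_left

lemma comm_mono {x y x' y' : C} (hx : x ≤ x') (hy : y ≤ y') : comm x y ≤ comm x' y' :=
  calc comm x y ≤ comm x' y := comm_mono_left y hx
    _ = comm y x' := comm_comm _ _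
    _ ≤ comm y' x' := comm_mono_left x' hy
    _ = comm x' y' := comm_comm _ _

lemma comm_sup_sup_le (p x y : C) : comm (p ⊔ x) (p ⊔ y) ≤ p ⊔ comm x y := by
  have hp : ∀ z : C, comm p z ≤ p ∧ comm z p ≤ p := fun z =>
    ⟨(comm_le_inf p z).trans inf_le_left, (comm_le_inf z p).trans inf_le_right⟩
  rw [comm_sup_left, comm_sup_right, comm_sup_right]
  exact sup_le (sup_le ((hp p).1.trans le_sup_left) ((hp y).1.trans le_sup_left))
    (sup_le ((hp x).2.trans le_sup_left) le_sup_right)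

lemma cpow_isCompact {c : C} (hc : IsCompactElement c) (n : ℕ) :
    IsCompactElement (cpow c n) := by
  induction n with
  | zero => exact hc
  | succ k ih => exact comm_isCompact _ _ ih ih

lemma cpow_antitone (c : C) : Antitone (cpow c) :=
  antitone_nat_of_succ_le fun _ => (comm_le_inf _ _).trans inf_le_left

lemma exists_maximal_forall_not_cpow_le {c x : C} (hc : IsCompactElement c)
    (hx : ∀ n, ¬ cpow c n ≤ x) :
    ∃ p, x ≤ p ∧ Maximal (fun y => ∀ n, ¬ cpow c n ≤ y) p := by
  refine zorn_le_nonempty₀ _ (fun ch hchS hch y hy => ⟨sSup ch, ?_, fun z hz => le_sSup hz⟩) x hx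
  intro n hn
  obtain ⟨z, hz, hle⟩ := (isCompactElement_iff_le_of_directed_sSup_le C (cpow c n)).mp
    (cpow_isCompact hc n) ch ⟨y, hy⟩ hch.directedOn hn
  exact hchS hz n hle

lemma isPrime_of_maximal_forall_not_cpow_le {c p : C}
    (hp : Maximal (fun y => ∀ n, ¬ cpow c n ≤ y) p) : IsPrime p := by
  refine ⟨fun htop => hp.prop 0 (htop ▸ le_top), fun x y hxy => ?_⟩
  by_contra! hxyp
  have hbelow : ∀ z, ¬ z ≤ p → ∃ n, cpow c n ≤ p ⊔ z := fun z hz => by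
    simpa using hp.not_prop_of_gt (left_lt_sup.mpr hz)
  obtain ⟨n, hn⟩ := hbelow x hxyp.1
  obtain ⟨m, hm⟩ := hbelow y hxyp.2
  apply hp.prop (max n m + 1)
  calc cpow c (max n m + 1)
      ≤ comm (p ⊔ x) (p ⊔ y) :=
        comm_mono ((cpow_antitone c (le_max_left n m)).trans hn)
          ((cpow_antitone c (le_max_right n m)).trans hm)
    _ ≤ p ⊔ comm x y := comm_sup_sup_le p x y
    _ = p := sup_eq_left.mpr hxy

lemma exists_cpow_le_of_le_radical {c x : C} (hc : IsCompactElement c) (h : c ≤ radical x) :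
    ∃ n, cpow c n ≤ x := by
  by_contra! hx
  obtain ⟨p, hxp, hp⟩ := exists_maximal_forall_not_cpow_le hc hx
  exact hp.prop 0 (h.trans (sInf_le ⟨isPrime_of_maximal_forall_not_cpow_le hp, hxp⟩))

theorem statement0 (h : Semiprime C ∨ Star C) (a b : C)
    (ha : IsCompactElement a) (hb : IsCompactElement b)
    (hab : comm a b ≤ radical (⊥ : C)) :
    ∃ m : ℕ, comm (cpow a m) (cpow b m) = ⊥ := by
  rcases h with hsemiprime | hstar
  · exact ⟨0, le_bot_iff.mp (hsemiprime ▸ hab)⟩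
  · obtain ⟨n, hn⟩ := exists_cpow_le_of_le_radical (comm_isCompact a b ha hb) hab
    obtain ⟨m, hm⟩ := hstar a b ha hb n
    exact ⟨m, le_bot_iff.mp (hm.trans hn)⟩

end CommutatorLattice
end

section
/- If t ∈ C and u ∈ C is pure, then [t,u] = t ⊓ u. -/
open CompleteLattice

namespace CommutatorLattice

variable {C : Type*} [CompleteLattice C] [CommutatorLattice C]

lemma comm_sup_left_s1 (a b c : C) : comm (a ⊔ b) c = comm a c ⊔ comm b c := by
  rw [← sSup_pair, comm_sSup, iSup_insert, iSup_singleton]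

lemma comm_sup_right_s1 (a b c : C) : comm a (b ⊔ c) = comm a b ⊔ comm a c := by
  rw [comm_comm, comm_sup_left_s1, comm_comm b, comm_comm c]

lemma comm_mono_left_s1 {a b : C} (c : C) (h : a ≤ b) : comm a c ≤ comm b c := by
  calc comm a c ≤ comm a c ⊔ comm b c := le_sup_left
    _ = comm b c := by rw [← comm_sup_left_s1, sup_eq_right.2 h]

lemma comm_resid_le (a b : C) : comm a (resid a b) ≤ b := by
  rw [resid, comm_comm, comm_sSup]
  exact iSup₂_le fun c hc => (comm_comm c a).trans_le hc

lemma comm_ann_eq_bot (a : C) : comm a (ann a) = ⊥ :=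
  le_bot_iff.1 (comm_resid_le a ⊥)

lemma comm_eq_self_of_sup_ann_eq_top {a u : C} (h : u ⊔ ann a = ⊤) : comm a u = a := by
  refine le_antisymm ((comm_le_inf a u).trans inf_le_left) (le_of_eq ?_)
  calc a = comm a ⊤ := (comm_top a).symm
    _ = comm a u := by rw [← h, comm_sup_right_s1, comm_ann_eq_bot, sup_bot_eq]

lemma le_of_forall_isCompactElement_le {x y : C}
    (h : ∀ a : C, IsCompactElement a → a ≤ x → a ≤ y) : x ≤ y := by
  obtain ⟨s, hs, rfl⟩ := compactlyGenerated x
  exact sSup_le fun a ha => h a (hs a ha) (le_sSup ha)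

theorem statement1 (t u : C) (hu : IsPure u) : comm t u = t ⊓ u := by
  refine le_antisymm (comm_le_inf t u) (le_of_forall_isCompactElement_le fun a ha hat => ?_)
  calc a = comm a u := (comm_eq_self_of_sup_ann_eq_top (hu a ha (hat.trans inf_le_right))).symm
    _ ≤ comm t u := comm_mono_left_s1 u (hat.trans inf_le_left)

end CommutatorLattice
end

section
/- If f : L → L' is a homomorphism of bounded distributive lattices (preserving 0 and 1) and I is a σ-ideal of L, then the ideal f•(I) of L' generated by f(I) is a σ-ideal of L'. -/
/-- An ideal of a bounded lattice, as a set: contains `⊥`, downward closed,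
and closed under finite joins. -/
def LatticeIdeal {L : Type*} [Lattice L] [BoundedOrder L] (I : Set L) : Prop :=
  ⊥ ∈ I ∧ (∀ x ∈ I, ∀ y : L, y ≤ x → y ∈ I) ∧ ∀ x ∈ I, ∀ y ∈ I, x ⊔ y ∈ I

/-- The ideal of a bounded lattice generated by a set. -/
def idealGen {L : Type*} [Lattice L] [BoundedOrder L] (S : Set L) : Set L :=
  ⋂₀ {J : Set L | LatticeIdeal J ∧ S ⊆ J}

/-- The annihilator `Ann(x) = {y | y ⊓ x = ⊥}`. -/
def latAnn {L : Type*} [Lattice L] [BoundedOrder L] (x : L) : Set L :=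
  {y : L | y ⊓ x = ⊥}

/-- A σ-ideal: an ideal `I` such that `I ∨ Ann(x) = L` for every `x ∈ I`. -/
def IsSigmaIdeal {L : Type*} [Lattice L] [BoundedOrder L] (I : Set L) : Prop :=
  LatticeIdeal I ∧ ∀ x ∈ I, idealGen (I ∪ latAnn x) = Set.univ

/-!
The join of two ideals `A` and `B` consists of the elements below some `a ⊔ b` with `a ∈ A`,
`b ∈ B`, so an ideal `I` is a σ-ideal exactly when every `x ∈ I` admits `a ∈ I` and `b` with
`b ⊓ x = ⊥` and `a ⊔ b = ⊤`. Every element `z` of `f•(I)` lies below some `f x` with `x ∈ I`,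
and then `f a`, `f b` are such witnesses for `z`.
-/

section Lattice

variable {L : Type*} [Lattice L] [BoundedOrder L]

lemma latticeIdeal_idealGen (S : Set L) : LatticeIdeal (idealGen S) :=
  ⟨fun _ hJ => hJ.1.1,
    fun _ hx y hyx J hJ => hJ.1.2.1 _ (hx J hJ) y hyx,
    fun _ hx _ hy J hJ => hJ.1.2.2 _ (hx J hJ) _ (hy J hJ)⟩

lemma subset_idealGen (S : Set L) : S ⊆ idealGen S :=
  fun _ hx _ hJ => hJ.2 hx

lemma idealGen_subset {S J : Set L} (hJ : LatticeIdeal J) (hSJ : S ⊆ J) : idealGen S ⊆ J :=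
  fun _ hx => hx J ⟨hJ, hSJ⟩

lemma idealGen_eq_of_subset {S J : Set L} (hJ : LatticeIdeal J) (hSJ : S ⊆ J)
    (hJS : J ⊆ idealGen S) : idealGen S = J :=
  (idealGen_subset hJ hSJ).antisymm hJS

lemma idealGen_eq_univ_iff {S : Set L} : idealGen S = Set.univ ↔ ⊤ ∈ idealGen S :=
  ⟨fun h => h ▸ Set.mem_univ _,
    fun h => Set.eq_univ_of_forall fun y => (latticeIdeal_idealGen S).2.1 ⊤ h y le_top⟩

lemma mem_idealGen_union {A B : Set L} (hA : LatticeIdeal A) (hB : LatticeIdeal B) {z : L} :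
    z ∈ idealGen (A ∪ B) ↔ ∃ a ∈ A, ∃ b ∈ B, z ≤ a ⊔ b := by
  have hgen := latticeIdeal_idealGen (A ∪ B)
  suffices idealGen (A ∪ B) = {z | ∃ a ∈ A, ∃ b ∈ B, z ≤ a ⊔ b} by rw [this]; rfl
  refine idealGen_eq_of_subset ⟨⟨⊥, hA.1, ⊥, hB.1, bot_le⟩, ?_, ?_⟩ ?_ ?_
  · rintro x ⟨a, ha, b, hb, hx⟩ y hyx
    exact ⟨a, ha, b, hb, hyx.trans hx⟩
  · rintro x ⟨a, ha, b, hb, hx⟩ y ⟨a', ha', b', hb', hy⟩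
    refine ⟨a ⊔ a', hA.2.2 a ha a' ha', b ⊔ b', hB.2.2 b hb b' hb', ?_⟩
    calc x ⊔ y ≤ (a ⊔ b) ⊔ (a' ⊔ b') := sup_le_sup hx hy
      _ = (a ⊔ a') ⊔ (b ⊔ b') := sup_sup_sup_comm a b a' b'
  · rintro x (hx | hx)
    exacts [⟨x, hx, ⊥, hB.1, le_sup_left⟩, ⟨⊥, hA.1, x, hx, le_sup_right⟩]
  · rintro x ⟨a, ha, b, hb, hx⟩
    have hab := hgen.2.2 a (subset_idealGen _ (.inl ha)) b (subset_idealGen _ (.inr hb))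
    exact hgen.2.1 _ hab x hx

lemma mem_idealGen_image {L' : Type*} [Lattice L'] [BoundedOrder L'] {F : Type*}
    [FunLike F L L'] [SupHomClass F L L'] (f : F) {I : Set L} (hI : LatticeIdeal I) {z : L'} :
    z ∈ idealGen (f '' I) ↔ ∃ x ∈ I, z ≤ f x := by
  suffices idealGen (f '' I) = {z | ∃ x ∈ I, z ≤ f x} by rw [this]; rfl
  refine idealGen_eq_of_subset ⟨⟨⊥, hI.1, bot_le⟩, ?_, ?_⟩ ?_ ?_
  · rintro z ⟨x, hx, hzx⟩ y hyz
    exact ⟨x, hx, hyz.trans hzx⟩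
  · rintro z ⟨x, hx, hzx⟩ y ⟨x', hx', hyx'⟩
    refine ⟨x ⊔ x', hI.2.2 x hx x' hx', ?_⟩
    rw [map_sup]
    exact sup_le_sup hzx hyx'
  · rintro _ ⟨x, hx, rfl⟩
    exact ⟨x, hx, le_rfl⟩
  · rintro z ⟨x, hx, hzx⟩
    exact (latticeIdeal_idealGen (f '' I)).2.1 _ (subset_idealGen _ ⟨x, hx, rfl⟩) z hzx

lemma latAnn_anti {x z : L} (hzx : z ≤ x) : latAnn x ⊆ latAnn z :=
  fun _ hb => le_bot_iff.mp (hb ▸ inf_le_inf_left _ hzx)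

lemma map_mem_latAnn {L' : Type*} [Lattice L'] [BoundedOrder L'] {F : Type*} [FunLike F L L']
    [InfHomClass F L L'] [BotHomClass F L L'] (f : F) {x b : L} (hb : b ∈ latAnn x) :
    f b ∈ latAnn (f x) := by
  simp only [latAnn, Set.mem_ofPred_eq] at hb ⊢
  rw [← map_inf, hb, map_bot]

end Lattice

section DistribLattice

variable {L : Type*} [DistribLattice L] [BoundedOrder L]

lemma latticeIdeal_latAnn (x : L) : LatticeIdeal (latAnn x) := by
  refine ⟨bot_inf_eq x, fun a ha y hya => ?_, fun a ha b hb => ?_⟩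
  · exact le_bot_iff.mp (ha ▸ inf_le_inf_right x hya)
  · simp only [latAnn, Set.mem_ofPred_eq] at ha hb ⊢
    rw [inf_sup_right, ha, hb, sup_idem]

lemma isSigmaIdeal_iff {I : Set L} :
    IsSigmaIdeal I ↔ LatticeIdeal I ∧ ∀ x ∈ I, ∃ a ∈ I, ∃ b ∈ latAnn x, a ⊔ b = ⊤ :=
  and_congr_right fun hI => forall₂_congr fun x _ => by
    simp only [idealGen_eq_univ_iff, mem_idealGen_union hI (latticeIdeal_latAnn x), top_le_iff]

end DistribLattice

theorem statement3 {L L' : Type*} [DistribLattice L] [BoundedOrder L]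
    [DistribLattice L'] [BoundedOrder L'] (f : BoundedLatticeHom L L')
    (I : Set L) (hI : IsSigmaIdeal I) :
    IsSigmaIdeal (idealGen (f '' I)) := by
  refine isSigmaIdeal_iff.2 ⟨latticeIdeal_idealGen _, fun z hz => ?_⟩
  obtain ⟨x, hx, hzx⟩ := (mem_idealGen_image f hI.1).1 hz
  obtain ⟨a, ha, b, hb, hab⟩ := (isSigmaIdeal_iff.1 hI).2 x hx
  refine ⟨f a, subset_idealGen _ ⟨a, ha, rfl⟩, f b, latAnn_anti hzx (map_mem_latAnn f hb), ?_⟩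
  rw [← map_sup, hab, map_top]
end

section
/- For every prime element p of C, the element s(p) := ⨆{a ∈ B(C) | a ≤ p} is a max-regular element of C. -/
/-!
If `a` has complement `b`, then `[a,b] ≤ a ⊓ b = ⊥ ≤ p`, so `a ≤ p` or `b ≤ p` since `p` is prime.
Thus if a regular `u ≠ ⊤` lies above `s(p)` and `a ≤ u` is complemented with `a ≰ p`, the
complement `b` is below `p`, hence below `s(p) ≤ u`, and `⊤ = a ⊔ b ≤ u`; so every
complemented element below `u` lies below `s(p)`, i.e. `u = s(p)`.
-/

open CompleteLattice

namespace CommutatorLattice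

variable {C : Type*} [CompleteLattice C]

/-- The largest regular element below `t`; the paper's `s(t)`. -/
def regularPart (t : C) : C := sSup {a : C | IsComplEl a ∧ a ≤ t}

theorem isRegular_regularPart (t : C) : IsRegular (regularPart t) :=
  ⟨_, fun _ ha => ha.1, rfl⟩

theorem regularPart_le (t : C) : regularPart t ≤ t :=
  sSup_le fun _ ha => ha.2

theorem IsComplEl.le_regularPart {a t : C} (ha : IsComplEl a) (hat : a ≤ t) :
    a ≤ regularPart t :=
  le_sSup ⟨ha, hat⟩

variable [CommutatorLattice C]

theorem IsPrime.le_or_le_of_inf_eq_bot {p a b : C} (hp : IsPrime p) (hab : a ⊓ b = ⊥) :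
    a ≤ p ∨ b ≤ p :=
  hp.2 a b <| calc
    comm a b ≤ a ⊓ b := comm_le_inf a b
    _ = ⊥ := hab
    _ ≤ p := bot_le

theorem IsComplEl.le_of_le_of_regularPart_le {p a u : C} (hp : IsPrime p) (ha : IsComplEl a)
    (hau : a ≤ u) (hu : u ≠ ⊤) (hpu : regularPart p ≤ u) : a ≤ p := by
  obtain ⟨b, hsup, hinf⟩ := ha
  refine (hp.le_or_le_of_inf_eq_bot hinf).resolve_right fun hbp => hu ?_
  have hb : IsComplEl b := ⟨a, by rwa [sup_comm], by rwa [inf_comm]⟩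
  have hbu : b ≤ u := (hb.le_regularPart hbp).trans hpu
  exact top_le_iff.mp (hsup ▸ sup_le hau hbu)

theorem statement6 (p : C) (hp : IsPrime p) :
    IsMaxRegular (sSup {a : C | IsComplEl a ∧ a ≤ p}) := by
  change IsMaxRegular (regularPart p)
  refine ⟨isRegular_regularPart p, ne_top_of_le_ne_top hp.1 (regularPart_le p), ?_⟩
  rintro u ⟨T, hT, rfl⟩ hu hpu
  refine le_antisymm (sSup_le fun a haT => ?_) hpu
  exact (hT a haT).le_regularPart
    ((hT a haT).le_of_le_of_regularPart_le hp (le_sSup haT) hu hpu)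

end CommutatorLattice
end
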